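/- If λ₁² + λ₂² + λ₃² ≤ 4/9, then the spin-1 polarization-scaling map Φ is positive, i.e., Φ(X) is positive semidefinite for every positive semidefinite X ∈ M₃(ℂ). -/

import Mathlib

open Matrix Kronecker
open scoped ComplexOrder

/-- The spin-1 angular momentum matrix J₁. -/
noncomputable def spinOneJ1 : Matrix (Fin 3) (Fin 3) ℂ :=
  ((1 / Real.sqrt 2 : ℝ) : ℂ) • !![0, 1, 0; 1, 0, 1; 0, 1, 0]

/-- The spin-1 angular momentum matrix J₂. -/
noncomputable def spinOneJ2 : Matrix (Fin 3) (Fin 3) ℂ :=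
  ((1 / Real.sqrt 2 : ℝ) : ℂ) • !![0, -Complex.I, 0; Complex.I, 0, -Complex.I; 0, Complex.I, 0]

/-- The spin-1 angular momentum matrix J₃. -/
def spinOneJ3 : Matrix (Fin 3) (Fin 3) ℂ := !![1, 0, 0; 0, 0, 0; 0, 0, -1]

/-- The spin-1 polarization-scaling map
`Φ(X) = (1/3)·tr(X)·I₃ + (1/2)·Σᵢ λᵢ·tr(X Jᵢ)·Jᵢ`. -/
noncomputable def Phi3 (l1 l2 l3 : ℝ) (X : Matrix (Fin 3) (Fin 3) ℂ) :
    Matrix (Fin 3) (Fin 3) ℂ :=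
  (1 / 3 : ℂ) • X.trace • (1 : Matrix (Fin 3) (Fin 3) ℂ) +
    (1 / 2 : ℂ) • ((l1 : ℂ) • (X * spinOneJ1).trace • spinOneJ1 +
      (l2 : ℂ) • (X * spinOneJ2).trace • spinOneJ2 +
      (l3 : ℂ) • (X * spinOneJ3).trace • spinOneJ3)

/-! With `sᵢ(X) = tr (X Jᵢ)`, the trace pairing `tr (Φ(X) Y) = tr X · tr Y / 3 + ½ Σᵢ λᵢ sᵢ(X) sᵢ(Y)`
is symmetric in `X` and `Y`, and `Φ(X) ⪰ 0` amounts to its nonnegativity for rank-one `Y = v v*`.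
For `X ⪰ 0` the spin vector obeys `|s(X)| ≤ tr X`: in entries this is
`2 |X₀₁ + X₁₂|² + (X₀₀ - X₂₂)² ≤ (tr X)²`, which follows from the `2 × 2` principal minors
`|X₀₁|² ≤ X₀₀ X₁₁`, `|X₁₂|² ≤ X₁₁ X₂₂` and AM-GM. Cauchy–Schwarz then bounds the spin term below
by `-½ |λ| tr X tr Y ≥ -⅓ tr X tr Y`. -/

namespace Matrix

variable {n R : Type*}

lemma IsHermitian.isSelfAdjoint_trace [Fintype n] [AddCommMonoid R] [StarAddMonoid R]
    {A : Matrix n n R} (hA : A.IsHermitian) : IsSelfAdjoint A.trace := by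
  rw [IsSelfAdjoint, ← trace_conjTranspose, hA.eq]

lemma IsHermitian.isSelfAdjoint_trace_mul [Fintype n] [CommSemiring R] [StarRing R]
    {A B : Matrix n n R} (hA : A.IsHermitian) (hB : B.IsHermitian) :
    IsSelfAdjoint (A * B).trace := by
  rw [IsSelfAdjoint, ← trace_conjTranspose, conjTranspose_mul, hA.eq, hB.eq, trace_mul_comm]

lemma dotProduct_mulVec_eq_trace_mul_vecMulVec [Fintype n] [CommSemiring R]
    (A : Matrix n n R) (v w : n → R) : w ⬝ᵥ A *ᵥ v = (A * vecMulVec v w).trace := by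
  rw [mul_vecMulVec, trace_vecMulVec, dotProduct_comm]

lemma PosSemidef.normSq_apply_le {X : Matrix n n ℂ} (hX : X.PosSemidef) (i j : n) :
    Complex.normSq (X i j) ≤ (X i i).re * (X j j).re := by
  have hdet := (hX.submatrix ![i, j]).det_nonneg
  rw [det_fin_two] at hdet
  simp only [submatrix_apply, cons_val_zero, cons_val_one] at hdet
  have hreal (k : n) : X k k = (X k k).re :=
    (Complex.re_eq_ofReal_of_isSelfAdjoint (hX.1.apply k k)).mp rfl
  rw [← hX.1.apply i j, hreal i, hreal j, Complex.star_def,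
    ← Complex.normSq_eq_conj_mul_self] at hdet
  rw [← hX.1.apply i j, Complex.star_def, Complex.normSq_conj]
  exact_mod_cast sub_nonneg.mp hdet

end Matrix

lemma two_mul_normSq_add_add_sq_le (p q : ℂ) {a b c : ℝ} (ha : 0 ≤ a) (hc : 0 ≤ c)
    (hp : Complex.normSq p ≤ a * b) (hq : Complex.normSq q ≤ b * c) :
    2 * Complex.normSq (p + q) + (a - c) ^ 2 ≤ (a + b + c) ^ 2 := by
  rw [Complex.normSq_eq_norm_sq] at hp hq ⊢
  have hpq : ‖p + q‖ ^ 2 ≤ (‖p‖ + ‖q‖) ^ 2 := by gcongr; exact norm_add_le p q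
  have hprod : (‖p‖ * ‖q‖) ^ 2 ≤ (a * b) * (b * c) := by
    rw [mul_pow]; exact mul_le_mul hp hq (by positivity) ((sq_nonneg _).trans hp)
  have hamgm : 4 * (‖p‖ * ‖q‖) ≤ b ^ 2 + 4 * (a * c) := by
    nlinarith [sq_nonneg (b ^ 2 - 4 * (a * c)), mul_nonneg ha hc, norm_nonneg p, norm_nonneg q]
  nlinarith

lemma Finset.sum_mul_mul_sq_le {ι R : Type*} [CommSemiring R] [LinearOrder R]
    [IsStrictOrderedRing R] [ExistsAddOfLE R] (s : Finset ι) (f g h : ι → R) :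
    (∑ i ∈ s, f i * g i * h i) ^ 2 ≤
      (∑ i ∈ s, f i ^ 2) * (∑ i ∈ s, g i ^ 2) * ∑ i ∈ s, h i ^ 2 := by
  have hgh : ∑ i ∈ s, (g i * h i) ^ 2 ≤ (∑ i ∈ s, g i ^ 2) * ∑ i ∈ s, h i ^ 2 := by
    rw [Finset.sum_mul]
    refine Finset.sum_le_sum fun i hi => ?_
    rw [mul_pow]
    exact mul_le_mul_of_nonneg_left
      (Finset.single_le_sum (f := fun j => h j ^ 2) (fun j _ => sq_nonneg _) hi) (sq_nonneg _)
  calc (∑ i ∈ s, f i * g i * h i) ^ 2 = (∑ i ∈ s, f i * (g i * h i)) ^ 2 := by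
        simp only [mul_assoc]
    _ ≤ (∑ i ∈ s, f i ^ 2) * ∑ i ∈ s, (g i * h i) ^ 2 := Finset.sum_mul_sq_le_sq_mul_sq s f _
    _ ≤ _ := by
        rw [mul_assoc]
        exact mul_le_mul_of_nonneg_left hgh (Finset.sum_nonneg fun i _ => sq_nonneg _)

noncomputable def spinOneJ : Fin 3 → Matrix (Fin 3) (Fin 3) ℂ := ![spinOneJ1, spinOneJ2, spinOneJ3]

noncomputable def spinVector (X : Matrix (Fin 3) (Fin 3) ℂ) (i : Fin 3) : ℝ :=
  (X * spinOneJ i).trace.re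

lemma spinOneJ_isHermitian (i : Fin 3) : (spinOneJ i).IsHermitian := by
  ext a b
  fin_cases i <;> fin_cases a <;> fin_cases b <;>
    simp [spinOneJ, spinOneJ1, spinOneJ2, spinOneJ3, Matrix.conjTranspose_apply]

lemma spinVector_eq_of_isHermitian {X : Matrix (Fin 3) (Fin 3) ℂ} (hX : X.IsHermitian) :
    spinVector X = ![√2 * (X 0 1 + X 1 2).re, -(√2 * (X 0 1 + X 1 2).im), (X 0 0 - X 2 2).re] := by
  have h10 : X 1 0 = star (X 0 1) := (hX.apply 1 0).symm
  have h21 : X 2 1 = star (X 1 2) := (hX.apply 2 1).symm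
  ext i
  fin_cases i <;>
  simp [spinVector, spinOneJ, spinOneJ1, spinOneJ2, spinOneJ3, trace_fin_three, mul_apply,
    Fin.sum_univ_three, h10, h21] <;> ring

lemma sum_spinVector_sq {X : Matrix (Fin 3) (Fin 3) ℂ} (hX : X.IsHermitian) :
    ∑ i, spinVector X i ^ 2 =
      2 * Complex.normSq (X 0 1 + X 1 2) + ((X 0 0).re - (X 2 2).re) ^ 2 := by
  simp only [spinVector_eq_of_isHermitian hX, Fin.sum_univ_three, cons_val_zero, cons_val_one,
    cons_val, neg_sq, mul_pow, Real.sq_sqrt zero_le_two, Complex.normSq_apply, Complex.add_re,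
    Complex.add_im, Complex.sub_re]
  ring

lemma Matrix.PosSemidef.sum_spinVector_sq_le {X : Matrix (Fin 3) (Fin 3) ℂ} (hX : X.PosSemidef) :
    ∑ i, spinVector X i ^ 2 ≤ X.trace.re ^ 2 := by
  have hdiag (i : Fin 3) : 0 ≤ (X i i).re := (Complex.nonneg_iff.mp hX.diag_nonneg).1
  rw [sum_spinVector_sq hX.1, trace_fin_three, Complex.add_re, Complex.add_re]
  exact two_mul_normSq_add_add_sq_le _ _ (hdiag 0) (hdiag 2)
    (hX.normSq_apply_le 0 1) (hX.normSq_apply_le 1 2)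

lemma isHermitian_Phi3 (l1 l2 l3 : ℝ) {X : Matrix (Fin 3) (Fin 3) ℂ} (hX : X.IsHermitian) :
    (Phi3 l1 l2 l3 X).IsHermitian := by
  have hterm (r : ℝ) (i : Fin 3) :
      ((r : ℂ) • (X * spinOneJ i).trace • spinOneJ i).IsHermitian :=
    ((spinOneJ_isHermitian i).smul (hX.isSelfAdjoint_trace_mul (spinOneJ_isHermitian i))).smul
      (Complex.conj_ofReal r)
  exact ((isHermitian_one.smul hX.isSelfAdjoint_trace).smul (by simp)).add
    ((((hterm l1 0).add (hterm l2 1)).add (hterm l3 2)).smul (by simp))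

lemma trace_Phi3_mul (l1 l2 l3 : ℝ) (X Y : Matrix (Fin 3) (Fin 3) ℂ) :
    (Phi3 l1 l2 l3 X * Y).trace = X.trace * Y.trace / 3 +
      (∑ i, (![l1, l2, l3] i : ℂ) * (X * spinOneJ i).trace * (Y * spinOneJ i).trace) / 2 := by
  simp only [Phi3, add_mul, Matrix.smul_mul, one_mul, trace_add, trace_smul, smul_eq_mul,
    trace_mul_comm _ Y, Fin.sum_univ_three, spinOneJ, cons_val_zero, cons_val_one, cons_val]
  ring

lemma trace_Phi3_mul_eq_ofReal (l1 l2 l3 : ℝ) {X Y : Matrix (Fin 3) (Fin 3) ℂ}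
    (hX : X.IsHermitian) (hY : Y.IsHermitian) :
    (Phi3 l1 l2 l3 X * Y).trace = ((X.trace.re * Y.trace.re / 3 +
      (∑ i, ![l1, l2, l3] i * spinVector X i * spinVector Y i) / 2 : ℝ) : ℂ) := by
  have hJ {Z : Matrix (Fin 3) (Fin 3) ℂ} (hZ : Z.IsHermitian) (i : Fin 3) :
      (Z * spinOneJ i).trace = spinVector Z i :=
    (Complex.re_eq_ofReal_of_isSelfAdjoint
      (hZ.isSelfAdjoint_trace_mul (spinOneJ_isHermitian i))).mp rfl
  have htr {Z : Matrix (Fin 3) (Fin 3) ℂ} (hZ : Z.IsHermitian) : Z.trace = Z.trace.re :=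
    (Complex.re_eq_ofReal_of_isSelfAdjoint hZ.isSelfAdjoint_trace).mp rfl
  rw [trace_Phi3_mul, htr hX, htr hY]
  simp only [hJ hX, hJ hY]
  push_cast
  rfl

lemma trace_Phi3_mul_nonneg {l1 l2 l3 : ℝ} (hl : l1 ^ 2 + l2 ^ 2 + l3 ^ 2 ≤ 4 / 9)
    {X Y : Matrix (Fin 3) (Fin 3) ℂ} (hX : X.PosSemidef) (hY : Y.PosSemidef) :
    0 ≤ (Phi3 l1 l2 l3 X * Y).trace := by
  rw [trace_Phi3_mul_eq_ofReal l1 l2 l3 hX.1 hY.1, Complex.zero_le_real]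
  set S := ∑ i, ![l1, l2, l3] i * spinVector X i * spinVector Y i
  have hXt : 0 ≤ X.trace.re := (Complex.nonneg_iff.mp hX.trace_nonneg).1
  have hYt : 0 ≤ Y.trace.re := (Complex.nonneg_iff.mp hY.trace_nonneg).1
  have hl' : ∑ i, ![l1, l2, l3] i ^ 2 ≤ (2 / 3) ^ 2 := by
    simp only [Fin.sum_univ_three, cons_val_zero, cons_val_one, cons_val]; linarith
  have hS : S ^ 2 ≤ (2 / 3 * (X.trace.re * Y.trace.re)) ^ 2 := by
    calc S ^ 2
        ≤ (∑ i, ![l1, l2, l3] i ^ 2) * (∑ i, spinVector X i ^ 2) * ∑ i, spinVector Y i ^ 2 :=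
          Finset.sum_mul_mul_sq_le _ _ _ _
      _ ≤ (2 / 3) ^ 2 * X.trace.re ^ 2 * Y.trace.re ^ 2 := by
          gcongr
          exacts [hX.sum_spinVector_sq_le, hY.sum_spinVector_sq_le]
      _ = (2 / 3 * (X.trace.re * Y.trace.re)) ^ 2 := by ring
  linarith [(abs_le_of_sq_le_sq' hS (by positivity)).1]

theorem spin_one_map_positive_of_sum_sq_le (l1 l2 l3 : ℝ)
    (hlam : l1 ^ 2 + l2 ^ 2 + l3 ^ 2 ≤ 4 / 9) :
    ∀ X : Matrix (Fin 3) (Fin 3) ℂ, X.PosSemidef → (Phi3 l1 l2 l3 X).PosSemidef := by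
  intro X hX
  refine .of_dotProduct_mulVec_nonneg (isHermitian_Phi3 l1 l2 l3 hX.1) fun v => ?_
  rw [dotProduct_mulVec_eq_trace_mul_vecMulVec]
  exact trace_Phi3_mul_nonneg hlam hX (posSemidef_vecMulVec_self_star v)
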